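/- Let H be a connected graph of order n that is not complete, with Laplacian eigenvalues μ_1(H) ≥ ... ≥ μ_n(H). Then for every integer k ≥ 1, the vertex connectivity of the lexicographic power H^k satisfies n^{k−1}·μ_{n−1}(H) ≤ υ(H^k) ≤ δ(H)·(n^k − 1)/(n − 1). -/

import Mathlib

open Matrix Finset

universe u

/-- The lexicographic product `H[G]` of two simple graphs. -/
def lexProd {α β : Type u} (H : SimpleGraph α) (G : SimpleGraph β) :
    SimpleGraph (α × β) where
  Adj x y := H.Adj x.1 y.1 ∨ (x.1 = y.1 ∧ G.Adj x.2 y.2)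
  symm := ⟨fun x y h => by
    rcases h with h | ⟨h1, h2⟩
    · exact Or.inl (H.symm.symm _ _ h)
    · exact Or.inr ⟨h1.symm, G.symm.symm _ _ h2⟩⟩
  loopless := ⟨fun x h => by
    rcases h with h | ⟨_, h2⟩
    · exact H.loopless.irrefl _ h
    · exact G.loopless.irrefl _ h2⟩

/-- Vertex type of the iterated lexicographic product `H^k[G]`. -/
def lexIterVert (α β : Type u) : ℕ → Type u
  | 0 => β
  | k + 1 => α × lexIterVert α β k

/-- Iterated lexicographic product: `H^0[G] = G`, `H^k[G] = H[H^{k-1}[G]]`. -/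
def lexIter {α β : Type u} (H : SimpleGraph α) (G : SimpleGraph β) :
    (k : ℕ) → SimpleGraph (lexIterVert α β k)
  | 0 => G
  | k + 1 => lexProd H (lexIter H G k)

instance lexIterVert.instFintype {α β : Type u} [Fintype α] [Fintype β] :
    ∀ k, Fintype (lexIterVert α β k)
  | 0 => inferInstanceAs (Fintype β)
  | k + 1 =>
      letI := lexIterVert.instFintype (α := α) (β := β) k
      inferInstanceAs (Fintype (α × lexIterVert α β k))

/-- Vertex type of the lexicographic power `H^k` (with `H^0 = K_1`). -/
def powVert (α : Type u) : ℕ → Type u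
  | 0 => PUnit
  | 1 => α
  | k + 2 => powVert α (k + 1) × α

/-- Lexicographic powers of a graph: `H^1 = H` and `H^k = H^{k-1}[H]` for `k ≥ 2`. -/
def lexPow {α : Type u} (H : SimpleGraph α) : (k : ℕ) → SimpleGraph (powVert α k)
  | 0 => ⊥
  | 1 => H
  | k + 2 => lexProd (lexPow H (k + 1)) H

instance powVert.instFintype {α : Type u} [Fintype α] : ∀ k, Fintype (powVert α k)
  | 0 => inferInstanceAs (Fintype PUnit)
  | 1 => inferInstanceAs (Fintype α)
  | k + 2 =>
      letI := powVert.instFintype (α := α) (k + 1)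
      inferInstanceAs (Fintype (powVert α (k + 1) × α))

/-- The degree of a vertex. -/
noncomputable def gdeg {α : Type u} [Fintype α] (G : SimpleGraph α) (v : α) : ℕ := by
  classical exact G.degree v

/-- The adjacency spectrum of a graph, as the multiset of roots (eigenvalues, with
multiplicity) of the characteristic polynomial of its adjacency matrix over `ℝ`. -/
noncomputable def adjSpectrum {α : Type u} [Fintype α] (G : SimpleGraph α) : Multiset ℝ := by
  classical exact (Matrix.charpoly (G.adjMatrix ℝ)).roots

/-- The Laplacian spectrum of a graph, as the multiset of roots (eigenvalues, with
multiplicity) of the characteristic polynomial of its Laplacian matrix over `ℝ`. -/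
noncomputable def lapSpectrum {α : Type u} [Fintype α] (G : SimpleGraph α) : Multiset ℝ := by
  classical exact (Matrix.charpoly (G.lapMatrix ℝ)).roots
/-- The minimum degree of a graph. -/
noncomputable def minDeg {α : Type u} [Fintype α] (G : SimpleGraph α) : ℕ :=
  sInf (Set.range fun v => gdeg G v)

/-- The vertex connectivity of a graph: the minimum number of vertices whose removal
yields a disconnected graph. -/
noncomputable def vertConn {α : Type u} [Fintype α] (G : SimpleGraph α) : ℕ :=
  sInf {r | ∃ s : Finset α, s.card = r ∧ ¬ (G.induce ((↑s : Set α)ᶜ)).Connected}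

/-!
Lower bound: Fiedler's inequality `μ_{n-1}(H) ≤ υ(H)`. If deleting a set `S` splits `H` into
sides `A` and `B` with no edges between them, the vector equal to `|B|` on `A`, to `-|A|` on `B`
and to `0` on `S` is orthogonal to the constants, and in the Laplacian quadratic form a vertex
outside `S` only meets its (at most `|S|`) neighbours in `S`, so the Rayleigh quotient of this
vector is at most `|S|`.
Then `υ(F[G]) ≥ |V(G)| υ(F)` for non-complete `F`: a set `T` of fewer than `|V(G)| υ(F)` vertices
of `F[G]` contains fewer than `υ(F)` whole fibres `{x} × V(G)`, so `F` minus those fibres stays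
connected and carries every surviving vertex of `F[G] - T` along with it.

Upper bound: `υ ≤ δ` for non-complete graphs, and `δ(F[G]) = δ(F) |V(G)| + δ(G)` gives
`δ(H^k) = δ(H) (1 + n + ⋯ + n^(k-1)) = δ(H) (n^k - 1) / (n - 1)`.
-/

open SimpleGraph

section VertConn

variable {V : Type u} [Fintype V] (G : SimpleGraph V)

lemma vertConn_le_card (s : Finset V) (hs : ¬ (G.induce (↑s : Set V)ᶜ).Connected) :
    vertConn G ≤ s.card :=
  Nat.sInf_le ⟨s, rfl, hs⟩

lemma connected_induce_of_card_lt_vertConn {s : Finset V} (hs : s.card < vertConn G) :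
    (G.induce (↑s : Set V)ᶜ).Connected := by
  by_contra h
  exact (vertConn_le_card G s h).not_gt hs

lemma exists_card_eq_vertConn :
    ∃ s : Finset V, s.card = vertConn G ∧ ¬ (G.induce (↑s : Set V)ᶜ).Connected :=
  Nat.sInf_mem (s := {r | ∃ s : Finset V, s.card = r ∧ ¬ (G.induce (↑s : Set V)ᶜ).Connected})
    ⟨_, univ, rfl, fun h => by obtain ⟨⟨v, hv⟩⟩ := h.nonempty; simp at hv⟩

lemma not_connected_induce_of_neighborFinset_subset [DecidableRel G.Adj] {s : Finset V}
    {v w : V} (hv : v ∉ s) (hw : w ∉ s) (hvw : v ≠ w) (hN : G.neighborFinset v ⊆ s) :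
    ¬ (G.induce (↑s : Set V)ᶜ).Connected := fun h => by
  obtain ⟨p⟩ := h.preconnected ⟨v, hv⟩ ⟨w, hw⟩
  have hadj := p.adj_snd (p.not_nil_of_ne fun h => hvw (congrArg Subtype.val h))
  exact p.snd.2 (hN ((G.mem_neighborFinset _ _).mpr hadj))

lemma vertConn_le_card_sub_two (hG : G ≠ ⊤) : vertConn G ≤ Fintype.card V - 2 := by
  classical
  obtain ⟨v, w, hvw, hnadj⟩ := G.ne_top_iff_exists_not_adj.mp hG
  calc vertConn G ≤ ({v, w}ᶜ : Finset V).card := by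
        refine vertConn_le_card G _ (not_connected_induce_of_neighborFinset_subset G
          (by simp) (by simp) hvw fun u hu => ?_)
        have hu := (G.mem_neighborFinset _ _).mp hu
        simp only [mem_compl, mem_insert, mem_singleton, not_or]
        exact ⟨hu.ne', fun h => hnadj (h ▸ hu)⟩
    _ = Fintype.card V - 2 := by rw [card_compl, card_pair hvw]

lemma exists_not_reachable_induce_compl_of_card_eq_vertConn (hG : G ≠ ⊤) :
    ∃ s : Finset V, s.card = vertConn G ∧
      ∃ p q : ((↑s : Set V)ᶜ : Set V), ¬ (G.induce (↑s : Set V)ᶜ).Reachable p q := by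
  obtain ⟨s, hs, hsconn⟩ := exists_card_eq_vertConn G
  obtain ⟨v, w, hvw, -⟩ := G.ne_top_iff_exists_not_adj.mp hG
  obtain ⟨z, -, hz⟩ := exists_mem_notMem_of_card_lt_card (s := s) (t := univ) (by
    have := vertConn_le_card_sub_two G hG
    have := Fintype.one_lt_card_iff.mpr ⟨v, w, hvw⟩
    rw [card_univ]
    omega)
  have : Nonempty ((↑s : Set V)ᶜ : Set V) := ⟨⟨z, hz⟩⟩
  refine ⟨s, hs, ?_⟩
  by_contra! h
  exact hsconn ⟨h⟩

lemma vertConn_le_degree [DecidableRel G.Adj] (hG : G ≠ ⊤) (v : V) :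
    vertConn G ≤ G.degree v := by
  classical
  by_cases h : ∃ w, w ≠ v ∧ ¬ G.Adj v w
  · obtain ⟨w, hwv, hvw⟩ := h
    rw [← G.card_neighborFinset_eq_degree]
    exact vertConn_le_card G _ (not_connected_induce_of_neighborFinset_subset G
      (by simp) (by simpa using hvw) hwv.symm le_rfl)
  · push Not at h
    have hN : G.neighborFinset v = univ.erase v := by
      ext w
      simpa using ⟨fun h => h.ne', h w⟩
    have := vertConn_le_card_sub_two G hG
    rw [← G.card_neighborFinset_eq_degree, hN, card_erase_of_mem (mem_univ v), card_univ]
    omega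

end VertConn

section MinDeg

variable {V : Type u} [Fintype V] (G : SimpleGraph V)

lemma gdeg_eq_degree [DecidableRel G.Adj] (v : V) : gdeg G v = G.degree v := by
  unfold gdeg
  congr!

lemma minDeg_le_gdeg (v : V) : minDeg G ≤ gdeg G v :=
  Nat.sInf_le ⟨v, rfl⟩

lemma exists_gdeg_eq_minDeg [Nonempty V] : ∃ v, gdeg G v = minDeg G :=
  Nat.sInf_mem (Set.range_nonempty _)

lemma le_minDeg [Nonempty V] {m : ℕ} (h : ∀ v, m ≤ gdeg G v) : m ≤ minDeg G := by
  obtain ⟨v, hv⟩ := exists_gdeg_eq_minDeg G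
  exact hv ▸ h v

lemma vertConn_le_minDeg [Nonempty V] (hG : G ≠ ⊤) : vertConn G ≤ minDeg G := by
  classical
  obtain ⟨v, hv⟩ := exists_gdeg_eq_minDeg G
  rw [← hv, gdeg_eq_degree]
  exact vertConn_le_degree G hG v

end MinDeg

section LexProd

variable {γ β : Type u} (F : SimpleGraph γ) (G : SimpleGraph β)

lemma gdeg_lexProd [Fintype γ] [Fintype β] (x : γ) (y : β) :
    gdeg (lexProd F G) (x, y) = gdeg F x * Fintype.card β + gdeg G y := by
  classical
  have hN : (lexProd F G).neighborFinset (x, y)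
      = F.neighborFinset x ×ˢ univ ∪ {x} ×ˢ G.neighborFinset y := by
    ext ⟨a, b⟩
    rw [mem_neighborFinset]
    simp [lexProd, eq_comm, and_comm]
  have hdisj : Disjoint (F.neighborFinset x ×ˢ (univ : Finset β)) ({x} ×ˢ G.neighborFinset y) :=
    disjoint_left.mpr fun ⟨a, b⟩ h h' => by
      simp only [mem_product, mem_neighborFinset, mem_singleton] at h h'
      exact h.1.ne' h'.1
  rw [gdeg_eq_degree, gdeg_eq_degree, gdeg_eq_degree, ← card_neighborFinset_eq_degree, hN,
    card_union_of_disjoint hdisj, card_product, card_product, card_singleton, one_mul, card_univ,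
    card_neighborFinset_eq_degree, card_neighborFinset_eq_degree]

lemma minDeg_lexProd [Fintype γ] [Fintype β] [Nonempty γ] [Nonempty β] :
    minDeg (lexProd F G) = minDeg F * Fintype.card β + minDeg G := by
  obtain ⟨x, hx⟩ := exists_gdeg_eq_minDeg F
  obtain ⟨y, hy⟩ := exists_gdeg_eq_minDeg G
  refine le_antisymm ?_ (le_minDeg _ fun ⟨x', y'⟩ => ?_)
  · simpa only [gdeg_lexProd, hx, hy] using minDeg_le_gdeg (lexProd F G) (x, y)
  · rw [gdeg_lexProd]
    gcongr
    exacts [minDeg_le_gdeg F x', minDeg_le_gdeg G y']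

lemma lexProd_ne_top [Nonempty β] (hF : F ≠ ⊤) : lexProd F G ≠ ⊤ := by
  obtain ⟨x, x', hxx', hnadj⟩ := F.ne_top_iff_exists_not_adj.mp hF
  obtain ⟨y⟩ := ‹Nonempty β›
  refine (lexProd F G).ne_top_iff_exists_not_adj.mpr ⟨(x, y), (x', y), by simpa using hxx', ?_⟩
  rintro (h | ⟨h, -⟩)
  exacts [hnadj h, hxx' h]

variable {F G}

lemma connected_induce_lexProd_compl {S : Finset γ} {T : Finset (γ × β)}
    (hS : ∀ x, x ∈ S ↔ ∀ y, (x, y) ∈ T) (hconn : (F.induce (↑S : Set γ)ᶜ).Connected)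
    (hnt : (↑S : Set γ)ᶜ.Nontrivial) :
    ((lexProd F G).induce (↑T : Set (γ × β))ᶜ).Connected := by
  have := hnt.coe_sort
  have hsurv : ∀ x ∉ S, ∃ y, (x, y) ∉ T := fun x hx => by simpa using (hS x).not.mp hx
  choose σ hσ using hsurv
  -- `x ↦ (x, σ x)` maps `F - S` into `F[G] - T`, and every `(x, y) ∉ T` is adjacent to the
  -- image of a neighbour of `x` in `F - S`.
  let f : F.induce (↑S : Set γ)ᶜ →g (lexProd F G).induce (↑T : Set (γ × β))ᶜ :=
    { toFun := fun x => ⟨(x, σ x x.2), hσ x x.2⟩, map_rel' := Or.inl }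
  have hreach : ∀ p z, ((lexProd F G).induce (↑T : Set (γ × β))ᶜ).Reachable p (f z) := by
    rintro ⟨⟨x, y⟩, hp⟩ z
    have hx : x ∉ S := fun hx => hp ((hS x).mp hx y)
    obtain ⟨x', hxx'⟩ := hconn.preconnected.exists_adj_of_nontrivial ⟨x, hx⟩
    exact (Adj.reachable (Or.inl hxx')).trans ((hconn.preconnected x' z).map f)
  obtain ⟨z⟩ := hconn.nonempty
  have : Nonempty _ := ⟨f z⟩
  exact ⟨fun p q => (hreach p z).trans (hreach q z).symm⟩

lemma card_mul_vertConn_le_vertConn_lexProd [Fintype γ] [Fintype β] (hF : F ≠ ⊤) :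
    Fintype.card β * vertConn F ≤ vertConn (lexProd F G) := by
  classical
  obtain ⟨T, hTcard, hT⟩ := exists_card_eq_vertConn (lexProd F G)
  rw [← hTcard]
  by_contra! hlt
  set S : Finset γ := univ.filter fun x => ∀ y, (x, y) ∈ T
  have hS : ∀ x, x ∈ S ↔ ∀ y, (x, y) ∈ T := by simp [S]
  have hST : S.card * Fintype.card β ≤ T.card := by
    rw [← card_univ (α := β), ← card_product]
    exact card_le_card fun ⟨x, y⟩ h => (hS x).mp (mem_product.mp h).1 y
  have hSlt : S.card < vertConn F := by
    by_contra! h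
    nlinarith
  refine hT (connected_induce_lexProd_compl hS (connected_induce_of_card_lt_vertConn F hSlt) ?_)
  rw [← coe_compl, nontrivial_coe, ← one_lt_card_iff_nontrivial, card_compl]
  have := vertConn_le_card_sub_two F hF
  omega

end LexProd

section LexPow

variable {α : Type u}

instance powVert.instNonempty [Nonempty α] : ∀ k, Nonempty (powVert α k)
  | 0 => ⟨PUnit.unit⟩
  | 1 => ‹Nonempty α›
  | k + 2 =>
      have := powVert.instNonempty (k + 1)
      inferInstanceAs (Nonempty (powVert α (k + 1) × α))

variable [Nonempty α] (H : SimpleGraph α)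

lemma lexPow_succ_ne_top (hH : H ≠ ⊤) : ∀ k, lexPow H (k + 1) ≠ ⊤
  | 0 => hH
  | k + 1 => lexProd_ne_top _ _ (lexPow_succ_ne_top hH k)

variable [Fintype α]

lemma minDeg_lexPow_succ (k : ℕ) :
    minDeg (lexPow H (k + 1)) = minDeg H * ∑ i ∈ range (k + 1), Fintype.card α ^ i := by
  induction k with
  | zero =>
    rw [zero_add, range_one, sum_singleton, pow_zero, mul_one]
    rfl
  | succ k ih =>
    show minDeg (lexProd (lexPow H (k + 1)) H) = _
    rw [minDeg_lexProd, ih, geom_sum_succ (n := k + 1)]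
    ring

lemma card_pow_mul_vertConn_le_vertConn_lexPow_succ (hH : H ≠ ⊤) (k : ℕ) :
    Fintype.card α ^ k * vertConn H ≤ vertConn (lexPow H (k + 1)) := by
  induction k with
  | zero =>
    rw [pow_zero, one_mul]
    rfl
  | succ k ih =>
    calc Fintype.card α ^ (k + 1) * vertConn H
        = Fintype.card α * (Fintype.card α ^ k * vertConn H) := by ring
      _ ≤ Fintype.card α * vertConn (lexPow H (k + 1)) := Nat.mul_le_mul_left _ ih
      _ ≤ vertConn (lexPow H (k + 2)) :=
        card_mul_vertConn_le_vertConn_lexProd (lexPow_succ_ne_top H hH k)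

end LexPow

section Rayleigh

variable {V : Type u} [Fintype V] [DecidableEq V] {A : Matrix V V ℝ}

lemma Matrix.IsHermitian.sum_eigenvectorBasis_dotProduct_mul (hA : A.IsHermitian)
    (x y : V → ℝ) :
    ∑ i, (⇑(hA.eigenvectorBasis i) ⬝ᵥ x) * (⇑(hA.eigenvectorBasis i) ⬝ᵥ y) = x ⬝ᵥ y := by
  simpa [EuclideanSpace.inner_eq_star_dotProduct, dotProduct_comm y] using
    hA.eigenvectorBasis.sum_inner_mul_inner (WithLp.toLp 2 x) (WithLp.toLp 2 y)

lemma Matrix.IsHermitian.eigenvectorBasis_dotProduct_mulVec (hA : A.IsHermitian) (i : V)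
    (x : V → ℝ) :
    ⇑(hA.eigenvectorBasis i) ⬝ᵥ (A *ᵥ x) = hA.eigenvalues i * (⇑(hA.eigenvectorBasis i) ⬝ᵥ x) := by
  rw [dotProduct_mulVec, ← mulVec_transpose, ← conjTranspose_eq_transpose_of_trivial, hA.eq,
    hA.mulVec_eigenvectorBasis, smul_dotProduct, smul_eq_mul]

lemma Matrix.IsHermitian.mul_dotProduct_self_le_dotProduct_mulVec (hA : A.IsHermitian) {μ : ℝ}
    {x : V → ℝ} (hx : ∀ i, hA.eigenvalues i < μ → ⇑(hA.eigenvectorBasis i) ⬝ᵥ x = 0) :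
    μ * (x ⬝ᵥ x) ≤ x ⬝ᵥ (A *ᵥ x) := by
  rw [← hA.sum_eigenvectorBasis_dotProduct_mul, ← hA.sum_eigenvectorBasis_dotProduct_mul, mul_sum]
  refine sum_le_sum fun i _ => ?_
  rw [hA.eigenvectorBasis_dotProduct_mulVec]
  rcases lt_or_ge (hA.eigenvalues i) μ with h | h
  · simp [hx i h]
  · nlinarith [mul_self_nonneg (⇑(hA.eigenvectorBasis i) ⬝ᵥ x)]

end Rayleigh

lemma card_filter_lt_le_one_of_antitone {n : ℕ} {f : Fin n → ℝ} (hf : Antitone f)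
    (h : n - 2 < n) : #{j | f j < f ⟨n - 2, h⟩} ≤ 1 := by
  refine card_le_one.mpr fun j hj j' hj' => ?_
  have hlast : ∀ j, f j < f ⟨n - 2, h⟩ → (j : ℕ) = n - 1 := fun j hj => by
    by_contra hne
    have := j.isLt
    exact (hf (show j ≤ ⟨n - 2, h⟩ by change (j : ℕ) ≤ n - 2; omega)).not_gt hj
  exact Fin.ext ((hlast j (mem_filter.mp hj).2).trans (hlast j' (mem_filter.mp hj').2).symm)

lemma card_filter_lt_eq_of_map_eq {ι κ : Type*} [Fintype ι] [Fintype κ] {f : ι → ℝ} {g : κ → ℝ}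
    (h : Multiset.map f univ.val = Multiset.map g univ.val) (μ : ℝ) :
    #{i | f i < μ} = #{j | g j < μ} := by
  have := congrArg (Multiset.countP (· < μ)) h
  rw [Multiset.countP_map, Multiset.countP_map] at this
  simpa only [← Finset.card_val, Finset.filter_val, Multiset.countP_eq_card_filter] using this

section Laplacian

variable {V : Type u} [Fintype V] [DecidableEq V] (G : SimpleGraph V) [DecidableRel G.Adj]

lemma dotProduct_lapMatrix_mulVec_le (s : Finset V) {x : V → ℝ} (hs : ∀ i ∈ s, x i = 0)
    (hx : ∀ i j, G.Adj i j → i ∉ s → j ∉ s → x i = x j) :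
    x ⬝ᵥ (G.lapMatrix ℝ *ᵥ x) ≤ s.card * (x ⬝ᵥ x) := by
  simp only [dotProduct, mul_sum]
  refine sum_le_sum fun i _ => ?_
  have hterm : ∀ u ∈ G.neighborFinset i, x i * (x i - x u) ≤ if u ∈ s then x i * x i else 0 := by
    intro u hu
    by_cases hus : u ∈ s
    · simp [hus, hs u hus]
    by_cases his : i ∈ s
    · simp [hus, hs i his]
    · simp [hus, hx i u ((G.mem_neighborFinset _ _).mp hu) his hus]
  calc x i * (G.lapMatrix ℝ *ᵥ x) i = ∑ u ∈ G.neighborFinset i, x i * (x i - x u) := by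
        simp only [lapMatrix_mulVec_apply, mul_sub, sum_sub_distrib, ← mul_sum, sum_const,
          card_neighborFinset_eq_degree, nsmul_eq_mul]
    _ ≤ ∑ u ∈ G.neighborFinset i, if u ∈ s then x i * x i else 0 := sum_le_sum hterm
    _ = (G.neighborFinset i ∩ s).card * (x i * x i) := by rw [sum_ite_mem, sum_const, nsmul_eq_mul]
    _ ≤ s.card * (x i * x i) := by
        gcongr
        · exact mul_self_nonneg _
        · exact inter_subset_right

lemma exists_dotProduct_lapMatrix_mulVec_le_of_not_reachable {s : Finset V}
    {p q : ((↑s : Set V)ᶜ : Set V)} (hpq : ¬ (G.induce (↑s : Set V)ᶜ).Reachable p q) :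
    ∃ x : V → ℝ, x ≠ 0 ∧ ∑ i, x i = 0 ∧ x ⬝ᵥ (G.lapMatrix ℝ *ᵥ x) ≤ s.card * (x ⬝ᵥ x) := by
  classical
  set K := G.induce (↑s : Set V)ᶜ
  set A : Finset V := univ.filter fun z => ∃ h : z ∉ s, K.Reachable p ⟨z, h⟩
  set B : Finset V := univ.filter fun z => ∃ h : z ∉ s, ¬ K.Reachable p ⟨z, h⟩
  have hA : ∀ z (hz : z ∉ s), z ∈ A ↔ K.Reachable p ⟨z, hz⟩ := fun z hz => by
    simpa [A] using ⟨fun ⟨_, h⟩ => h, fun h => ⟨hz, h⟩⟩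
  have hB : ∀ z (hz : z ∉ s), z ∈ B ↔ ¬ K.Reachable p ⟨z, hz⟩ := fun z hz => by
    simpa [B] using ⟨fun ⟨_, h⟩ => h, fun h => ⟨hz, h⟩⟩
  have hsA : ∀ z ∈ s, z ∉ A := by simp +contextual [A]
  have hsB : ∀ z ∈ s, z ∉ B := by simp +contextual [B]
  have hpA : ↑p ∈ A := (hA p p.2).mpr .rfl
  have hpB : ↑p ∉ B := fun h => (hB p p.2).mp h .rfl
  have hqB : ↑q ∈ B := (hB q q.2).mpr hpq
  let x : V → ℝ := fun z =>
    (if z ∈ A then (B.card : ℝ) else 0) - (if z ∈ B then (A.card : ℝ) else 0)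
  refine ⟨x, fun h => ?_, ?_,
    dotProduct_lapMatrix_mulVec_le G s (fun i hi => ?_) fun i j hij hi hj => ?_⟩
  · have hxp := congrFun h p
    simp only [x, hpA, hpB, if_true, if_false, sub_zero, Pi.zero_apply, Nat.cast_eq_zero] at hxp
    exact (card_ne_zero_of_mem hqB) hxp
  · simp [x, sum_sub_distrib, sum_ite_mem, mul_comm]
  · simp [x, hsA i hi, hsB i hi]
  · have hreach : K.Reachable p ⟨i, hi⟩ ↔ K.Reachable p ⟨j, hj⟩ :=
      have hadj : K.Adj ⟨i, hi⟩ ⟨j, hj⟩ := hij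
      ⟨fun h => h.trans hadj.reachable, fun h => h.trans hadj.reachable.symm⟩
    simp only [x, hA i hi, hA j hj, hB i hi, hB j hj, hreach]

lemma lapSpectrum_eq_map_eigenvalues :
    lapSpectrum G = Multiset.map (G.isHermitian_lapMatrix ℝ).eigenvalues univ.val := by
  have := (G.isHermitian_lapMatrix ℝ).roots_charpoly_eq_eigenvalues
  simp only [RCLike.ofReal_real_eq_id, Function.id_comp] at this
  rw [← this, lapSpectrum]
  congr!

lemma exists_eigenvalues_lapMatrix_eq_zero [Nonempty V] :
    ∃ i, (G.isHermitian_lapMatrix ℝ).eigenvalues i = 0 := by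
  have := (G.isHermitian_lapMatrix ℝ).det_eq_prod_eigenvalues
  rw [det_lapMatrix_eq_zero] at this
  obtain ⟨i, -, hi⟩ := prod_eq_zero_iff.mp this.symm
  exact ⟨i, by simpa using hi⟩

lemma eigenvectorBasis_lapMatrix_dotProduct_eq_zero (hG : G.Connected) {i : V}
    (hi : (G.isHermitian_lapMatrix ℝ).eigenvalues i = 0) {x : V → ℝ} (hx : ∑ j, x j = 0) :
    ⇑((G.isHermitian_lapMatrix ℝ).eigenvectorBasis i) ⬝ᵥ x = 0 := by
  set b := ⇑((G.isHermitian_lapMatrix ℝ).eigenvectorBasis i)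
  have hker : G.lapMatrix ℝ *ᵥ b = 0 := by
    rw [(G.isHermitian_lapMatrix ℝ).mulVec_eigenvectorBasis, hi, zero_smul]
  obtain ⟨v⟩ := hG.nonempty
  have hconst : ∀ j, b j = b v := fun j =>
    (lapMatrix_mulVec_eq_zero_iff_forall_reachable G).mp hker j v (hG.preconnected j v)
  simp [dotProduct, hconst, ← mul_sum, hx]

theorem le_vertConn_of_lapSpectrum_eq (hG : G.Connected) (hnc : G ≠ ⊤) {n : ℕ} {μs : Fin n → ℝ}
    (hanti : Antitone μs) (hspec : lapSpectrum G = Multiset.map μs univ.val) (h : n - 2 < n) :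
    μs ⟨n - 2, h⟩ ≤ vertConn G := by
  set hL := G.isHermitian_lapMatrix ℝ
  set μ := μs ⟨n - 2, h⟩
  rcases le_or_gt μ 0 with hμ | hμ
  · exact hμ.trans (Nat.cast_nonneg _)
  have hcard : #{i | hL.eigenvalues i < μ} ≤ 1 := by
    rw [card_filter_lt_eq_of_map_eq ((lapSpectrum_eq_map_eigenvalues G).symm.trans hspec)]
    exact card_filter_lt_le_one_of_antitone hanti h
  have := hG.nonempty
  obtain ⟨i₀, hi₀⟩ := exists_eigenvalues_lapMatrix_eq_zero G
  obtain ⟨s, hs, p, q, hpq⟩ := exists_not_reachable_induce_compl_of_card_eq_vertConn G hnc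
  obtain ⟨x, hx0, hxsum, hxle⟩ := exists_dotProduct_lapMatrix_mulVec_le_of_not_reachable G hpq
  -- As `0 < μ`, the only eigenvalue below `μ` is the eigenvalue `0`, whose eigenvectors are
  -- constant, hence orthogonal to `x`.
  have horth : ∀ i, hL.eigenvalues i < μ → ⇑(hL.eigenvectorBasis i) ⬝ᵥ x = 0 := fun i hi => by
    have : i = i₀ := card_le_one.mp hcard i (by simpa using hi) i₀ (by simpa [hi₀] using hμ)
    exact eigenvectorBasis_lapMatrix_dotProduct_eq_zero G hG (this ▸ hi₀) hxsum
  have hxx : 0 < x ⬝ᵥ x := lt_of_le_of_ne (sum_nonneg fun i _ => mul_self_nonneg _)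
    (Ne.symm (dotProduct_self_eq_zero.not.mpr hx0))
  rw [← hs]
  exact le_of_mul_le_mul_right ((hL.mul_dotProduct_self_le_dotProduct_mulVec horth).trans hxle) hxx

end Laplacian

/-- For a connected non-complete graph `H` of order `n` with Laplacian
eigenvalues `μ_1(H) ≥ … ≥ μ_n(H)`, the vertex connectivity of `H^k` satisfies
`n^(k-1)·μ_{n-1}(H) ≤ υ(H^k) ≤ δ(H)·(n^k - 1)/(n - 1)` (the natural division being
exact). -/
theorem vertConn_lexPow_bounds {α : Type u} [Fintype α]
    (H : SimpleGraph α) (n : ℕ) (hn : Fintype.card α = n)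
    (hconn : H.Connected) (hnc : H ≠ ⊤)
    (muH : Fin n → ℝ) (hanti : Antitone muH)
    (hspec : lapSpectrum H = Multiset.map muH Finset.univ.val) :
    ∀ k : ℕ, 1 ≤ k →
      (n : ℝ) ^ (k - 1) *
          muH ⟨n - 2, by
            have h0 : 0 < n := hn ▸ Fintype.card_pos_iff.mpr hconn.nonempty
            omega⟩
        ≤ (vertConn (lexPow H k) : ℝ) ∧
      (vertConn (lexPow H k) : ℝ) ≤ ((minDeg H * ((n ^ k - 1) / (n - 1)) : ℕ) : ℝ) := by
  classical
  intro k hk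
  obtain ⟨m, rfl⟩ := Nat.exists_eq_add_of_le' hk
  have := hconn.nonempty
  subst hn
  have hn2 : 2 ≤ Fintype.card α := by
    obtain ⟨a, b, hab, -⟩ := H.ne_top_iff_exists_not_adj.mp hnc
    exact Fintype.one_lt_card_iff.mpr ⟨a, b, hab⟩
  refine ⟨?_, ?_⟩
  · calc (Fintype.card α : ℝ) ^ (m + 1 - 1) * muH _
        ≤ (Fintype.card α : ℝ) ^ m * vertConn H := by
          rw [Nat.add_sub_cancel]
          gcongr
          exact le_vertConn_of_lapSpectrum_eq H hconn hnc hanti hspec _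
      _ ≤ vertConn (lexPow H (m + 1)) := by
          exact_mod_cast card_pow_mul_vertConn_le_vertConn_lexPow_succ H hnc m
  · rw [← Nat.geomSum_eq hn2, ← minDeg_lexPow_succ]
    exact_mod_cast vertConn_le_minDeg _ (lexPow_succ_ne_top H hnc m)
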